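/- For any M × N matrix A over a commutative ring R and any k ∈ Fin N, the k-th column of A satisfies A · e_{N,k} = [vec(I_N)^T ⊗ I_M] · (e_{N,k} ⊗ vec(A)), where the column index type (N × N) × M of vec(I_N)^T ⊗ I_M is identified with the row index type N × (N × M) of e_{N,k} ⊗ vec(A) via the natural associativity equivalence. -/

import Mathlib

open Matrix

/-- Vectorization of a matrix: the column matrix obtained by stacking the
columns of `A` vertically, so `vec A (j, i) () = A i j`. -/
def vec {R : Type*} {m n : Type*} (A : Matrix m n R) : Matrix (n × m) Unit R :=
  Matrix.of fun p _ => A p.2 p.1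

/-- The `k`-th column of the `N × N` identity matrix, regarded as an `N × 1`
column matrix. -/
def eCol {R : Type*} [CommRing R] {N : ℕ} (k : Fin N) : Matrix (Fin N) Unit R :=
  Matrix.of fun i _ => if i = k then (1 : R) else 0

/-- For any `M × N` matrix `A` and `k : Fin N`, the `k`-th column of `A`
satisfies `A * e_{N,k} = [vec(Iₙ)ᵀ ⊗ I_M] * (e_{N,k} ⊗ vec A)`, where the
column index type `(N × N) × M` of the first factor is identified with the row
index type `N × (N × M)` of the second via the associativity equivalence, and
the `M × 1` column matrix `A * e_{N,k}` is viewed as indexed by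
`(Unit × M) × (Unit × Unit)`. -/
theorem col_eq_kronecker_formula {R : Type*} [CommRing R] {M N : ℕ}
    (A : Matrix (Fin M) (Fin N) R) (k : Fin N) :
    Matrix.reindex (Equiv.punitProd (Fin M)).symm (Equiv.punitProd Unit).symm
        (A * eCol k) =
      (Matrix.reindex (Equiv.refl (Unit × Fin M))
          (Equiv.prodAssoc (Fin N) (Fin N) (Fin M))
          (Matrix.kronecker (vec (1 : Matrix (Fin N) (Fin N) R))ᵀ
            (1 : Matrix (Fin M) (Fin M) R))) *
        Matrix.kronecker (eCol k) (vec A) := by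
  ext ⟨u, i⟩ ⟨v, w⟩
  simp only [Matrix.reindex_apply, Matrix.submatrix_apply, Matrix.mul_apply,
    Matrix.kroneckerMap_apply, Matrix.transpose_apply, _root_.vec, eCol, Matrix.of_apply,
    Equiv.punitProd, Equiv.prodAssoc, Equiv.refl_apply, Equiv.coe_fn_symm_mk,
    Equiv.coe_fn_mk, Matrix.one_apply, Fintype.sum_prod_type]
  simp [Finset.sum_ite_eq, Finset.mul_sum, mul_comm]
  simp [Matrix.one_apply, eq_comm]
  show A i k = ∑ j, A i j * (if k = j then (1 : R) else 0)
  simp
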